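/- arXiv:1211.5588 — 8 statements merged into one kernel-verified Lean document; each statement's English description precedes it below -/
import Mathlib

section
/- In an LA-semihypergroup H with pure left identity e, the identity x ∘ (y ∘ z) = y ∘ (x ∘ z) holds for all x, y, z ∈ H (where ∘ is extended to sets elementwise). -/
/-!
The left invertive law with a pure left identity `e` gives `a ∘ b = (e ∘ a) ∘ b = (b ∘ a) ∘ e`,
hence `x ∘ S = (S ∘ x) ∘ e` for every set `S`. Therefore
`x ∘ (y ∘ z) = ((y ∘ z) ∘ x) ∘ e = ((x ∘ z) ∘ y) ∘ e = y ∘ (x ∘ z)`,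
the middle step being the left invertive law once more.
-/

open Set

/-- Elementwise extension of a hyperoperation to subsets:
`hmul op A B = ⋃_{a∈A, b∈B} op a b`. -/
def hmul {H : Type*} (op : H → H → Set H) (A B : Set H) : Set H :=
  ⋃ a ∈ A, ⋃ b ∈ B, op a b

section

variable {H : Type*} (op : H → H → Set H)

theorem hmul_singleton_left (a : H) (S : Set H) : hmul op {a} S = ⋃ s ∈ S, op a s := by
  simp [hmul]

theorem hmul_singleton_right (S : Set H) (a : H) : hmul op S {a} = ⋃ s ∈ S, op s a := by
  simp [hmul]

theorem hmul_biUnion_left {ι : Type*} (I : Set ι) (A : ι → Set H) (B : Set H) :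
    hmul op (⋃ i ∈ I, A i) B = ⋃ i ∈ I, hmul op (A i) B := by
  ext t
  simp only [hmul, mem_iUnion, exists_prop]
  grind

variable {op} (hLA : ∀ x y z : H, hmul op (op x y) {z} = hmul op (op z y) {x})
  {e : H} (he : ∀ a : H, op e a = {a})
include hLA he

theorem op_eq_hmul_op_swap_singleton (a b : H) : op a b = hmul op (op b a) {e} := by
  rw [← hLA e a b, he a, hmul_singleton_right, biUnion_singleton]

theorem hmul_singleton_left_eq_hmul_hmul (a : H) (S : Set H) :
    hmul op {a} S = hmul op (hmul op S {a}) {e} := by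
  rw [hmul_singleton_left, hmul_singleton_right op S, hmul_biUnion_left]
  exact iUnion₂_congr fun s _ => op_eq_hmul_op_swap_singleton hLA he a s

end

theorem stmt0_general {H : Type*} (op : H → H → Set H)
    (hLA : ∀ x y z : H, hmul op (op x y) {z} = hmul op (op z y) {x})
    (e : H) (he : ∀ a : H, op e a = {a}) :
    ∀ x y z : H, hmul op {x} (op y z) = hmul op {y} (op x z) := by
  intro x y z
  rw [hmul_singleton_left_eq_hmul_hmul hLA he x, hmul_singleton_left_eq_hmul_hmul hLA he y,
    hLA y z x]

theorem stmt0 {H : Type*} (op : H → H → Set H)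
    (hne : ∀ a b : H, (op a b).Nonempty)
    (hLA : ∀ x y z : H, hmul op (op x y) {z} = hmul op (op z y) {x})
    (e : H) (he : ∀ a : H, op e a = {a}) :
    ∀ x y z : H, hmul op {x} (op y z) = hmul op {y} (op x z) :=
  stmt0_general op hLA e he
end

section
/- If an LA-semihypergroup H has a pure right identity e, then e is also a pure left identity, i.e., e ∘ b = {b} for all b ∈ H. -/
open Set

@[simp]
theorem hmul_singleton_singleton {H : Type*} (op : H → H → Set H) (a c : H) :
    hmul op {a} {c} = op a c := by
  simp [hmul]

theorem stmt4_general {H : Type*} (op : H → H → Set H)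
    (hLA : ∀ x y z : H, hmul op (op x y) {z} = hmul op (op z y) {x})
    (e : H) (he : ∀ b : H, op b e = {b}) :
    ∀ b : H, op e b = {b} := by
  intro b
  calc op e b = hmul op (op e e) {b} := by rw [he, hmul_singleton_singleton]
    _ = hmul op (op b e) {e} := hLA e e b
    _ = {b} := by rw [he, hmul_singleton_singleton, he]

theorem stmt4 {H : Type*} (op : H → H → Set H)
    (hne : ∀ a b : H, (op a b).Nonempty)
    (hLA : ∀ x y z : H, hmul op (op x y) {z} = hmul op (op z y) {x})
    (e : H) (he : ∀ b : H, op b e = {b}) :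
    ∀ b : H, op e b = {b} :=
  stmt4_general op hLA e he
end

section
/- An LA-semihypergroup H is a semihypergroup (i.e., ∘ is associative: (a ∘ b) ∘ c = a ∘ (b ∘ c)) if and only if a ∘ (b ∘ c) = (c ∘ b) ∘ a holds for all a, b, c ∈ H. -/
open Set

theorem stmt5_general {H : Type*} (op : H → H → Set H)
    (hLA : ∀ x y z : H, hmul op (op x y) {z} = hmul op (op z y) {x}) :
    (∀ a b c : H, hmul op (op a b) {c} = hmul op {a} (op b c)) ↔
      (∀ a b c : H, hmul op {a} (op b c) = hmul op (op c b) {a}) := by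
  constructor
  · intro hassoc a b c
    rw [← hassoc, hLA]
  · intro hswap a b c
    rw [hLA, hswap]

theorem stmt5 {H : Type*} (op : H → H → Set H)
    (hne : ∀ a b : H, (op a b).Nonempty)
    (hLA : ∀ x y z : H, hmul op (op x y) {z} = hmul op (op z y) {x}) :
    (∀ a b c : H, hmul op (op a b) {c} = hmul op {a} (op b c)) ↔
      (∀ a b c : H, hmul op {a} (op b c) = hmul op (op c b) {a}) :=
  stmt5_general op hLA
end

section
/- Every left invertible LA-semihypergroup H with pure left identity e is intra-regular: for every a ∈ H there exist x, y ∈ H with a ∈ (x ∘ (a ∘ a)) ∘ y. (Indeed a ∈ (H ∘ (a ∘ a)) ∘ H.) -/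
/-!
Let `a' ∘ a ∋ e`. Then `a ∈ e ∘ a ⊆ (a' ∘ a) ∘ a = (a ∘ a) ∘ a'`, so `a ∈ p ∘ a'` for some
`p ∈ a ∘ a`. Feeding this back, `p ∈ (p ∘ a') ∘ a = (a ∘ a') ∘ p`, so `p ∈ x ∘ p` for some
`x ∈ a ∘ a'`, and hence `a ∈ p ∘ a' ⊆ (x ∘ (a ∘ a)) ∘ a'`.
-/

open Set

section

variable {H : Type*} {op : H → H → Set H}

lemma mem_hmul {A B : Set H} {t : H} :
    t ∈ hmul op A B ↔ ∃ a ∈ A, ∃ b ∈ B, t ∈ op a b := by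
  simp [hmul]

lemma mem_hmul_singleton_right {A : Set H} {z t : H} :
    t ∈ hmul op A {z} ↔ ∃ a ∈ A, t ∈ op a z := by
  simp [mem_hmul]

lemma mem_hmul_hmul {A B C : Set H} {x p q y t : H} (hx : x ∈ A) (hp : p ∈ B)
    (hq : q ∈ op x p) (hy : y ∈ C) (ht : t ∈ op q y) :
    t ∈ hmul op (hmul op A B) C :=
  mem_hmul.2 ⟨q, mem_hmul.2 ⟨x, hx, p, hp, hq⟩, y, hy, ht⟩

/-- The left invertive law `(x ∘ y) ∘ z = (z ∘ y) ∘ x`, read elementwise. -/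
lemma exists_mem_op_swap (hLA : ∀ x y z : H, hmul op (op x y) {z} = hmul op (op z y) {x})
    {x y z u t : H} (hu : u ∈ op x y) (ht : t ∈ op u z) : ∃ v ∈ op z y, t ∈ op v x := by
  have h : t ∈ hmul op (op x y) {z} := mem_hmul_singleton_right.2 ⟨u, hu, ht⟩
  rwa [hLA, mem_hmul_singleton_right] at h

lemma exists_mem_sq_fixed_left_of_left_inverse
    (hLA : ∀ x y z : H, hmul op (op x y) {z} = hmul op (op z y) {x})
    {e a a' : H} (he : op e a = {a}) (ha' : e ∈ op a' a) :
    ∃ p ∈ op a a, ∃ x, p ∈ op x p ∧ a ∈ op p a' := by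
  obtain ⟨p, hp, hap⟩ := exists_mem_op_swap hLA ha' (he ▸ mem_singleton a)
  obtain ⟨x, -, hpx⟩ := exists_mem_op_swap hLA hap hp
  exact ⟨p, hp, x, hpx, hap⟩

end

theorem stmt6_general {H : Type*} (op : H → H → Set H)
    (hLA : ∀ x y z : H, hmul op (op x y) {z} = hmul op (op z y) {x})
    (e : H) (he : ∀ a : H, op e a = {a})
    (hinv : ∀ a : H, ∃ a' : H, e ∈ op a' a) :
    ∀ a : H, (∃ x y : H, a ∈ hmul op (hmul op {x} (op a a)) {y}) ∧
      a ∈ hmul op (hmul op Set.univ (op a a)) Set.univ := by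
  intro a
  obtain ⟨a', ha'⟩ := hinv a
  obtain ⟨p, hp, x, hpx, hap⟩ := exists_mem_sq_fixed_left_of_left_inverse hLA (he a) ha'
  exact ⟨⟨x, a', mem_hmul_hmul rfl hp hpx rfl hap⟩,
    mem_hmul_hmul (mem_univ x) hp hpx (mem_univ a') hap⟩

theorem stmt6 {H : Type*} (op : H → H → Set H)
    (hne : ∀ a b : H, (op a b).Nonempty)
    (hLA : ∀ x y z : H, hmul op (op x y) {z} = hmul op (op z y) {x})
    (e : H) (he : ∀ a : H, op e a = {a})
    (hinv : ∀ a : H, ∃ a' : H, e ∈ op a' a) :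
    ∀ a : H, (∃ x y : H, a ∈ hmul op (hmul op {x} (op a a)) {y}) ∧
      a ∈ hmul op (hmul op Set.univ (op a a)) Set.univ :=
  stmt6_general op hLA e he hinv
end

section
/- If H is an LA-semihypergroup with a left identity such that a ∘ H = H for all a ∈ H, then also H ∘ a = H for all a ∈ H, and hence H is intra-regular. -/
open Set

section

variable {H : Type*} {op : H → H → Set H}

theorem mem_hmul_singleton_right_iff {A : Set H} {b c : H} :
    c ∈ hmul op A {b} ↔ ∃ a ∈ A, c ∈ op a b := by
  simp [hmul]

theorem mem_hmul_singleton_left_iff {B : Set H} {a c : H} :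
    c ∈ hmul op {a} B ↔ ∃ b ∈ B, c ∈ op a b := by
  simp [hmul]

/-- If `b ∘ H = H`, every `x` lies in some `b ∘ y`, and the LA law turns
`(b ∘ y) ∘ a` into `(a ∘ y) ∘ b ⊆ H ∘ b`. -/
theorem hmul_univ_singleton_subset
    (hLA : ∀ x y z : H, hmul op (op x y) {z} = hmul op (op z y) {x})
    {b : H} (hb : hmul op {b} univ = univ) (a : H) :
    hmul op univ {a} ⊆ hmul op univ {b} := by
  intro c hc
  obtain ⟨x, -, hcx⟩ := mem_hmul_singleton_right_iff.mp hc
  obtain ⟨y, -, hxy⟩ := mem_hmul_singleton_left_iff.mp (hb.symm ▸ mem_univ x)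
  have hc' : c ∈ hmul op (op a y) {b} := by
    rw [← hLA]
    exact mem_hmul_singleton_right_iff.mpr ⟨x, hxy, hcx⟩
  obtain ⟨z, -, hcz⟩ := mem_hmul_singleton_right_iff.mp hc'
  exact mem_hmul_singleton_right_iff.mpr ⟨z, mem_univ z, hcz⟩

theorem hmul_univ_singleton_eq_univ
    (hLA : ∀ x y z : H, hmul op (op x y) {z} = hmul op (op z y) {x})
    {e : H} (he : ∀ a : H, a ∈ op e a)
    {b : H} (hb : hmul op {b} univ = univ) :
    hmul op univ {b} = univ :=
  eq_univ_of_forall fun c =>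
    hmul_univ_singleton_subset hLA hb c
      (mem_hmul_singleton_right_iff.mpr ⟨e, mem_univ e, he c⟩)

/-- The witnesses are `x = e` and any `y` with `a ∈ u ∘ y`, where `u ∈ e ∘ s`, `s ∈ a ∘ a`. -/
theorem exists_mem_hmul_hmul_op_self (hne : ∀ a b : H, (op a b).Nonempty) (e : H)
    (h : ∀ a : H, hmul op {a} univ = univ) (a : H) :
    ∃ x y : H, a ∈ hmul op (hmul op {x} (op a a)) {y} := by
  obtain ⟨s, hs⟩ := hne a a
  obtain ⟨u, hu⟩ := hne e s
  obtain ⟨y, -, hay⟩ := mem_hmul_singleton_left_iff.mp ((h u).symm ▸ mem_univ a)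
  exact ⟨e, y, mem_hmul_singleton_right_iff.mpr
    ⟨u, mem_hmul_singleton_left_iff.mpr ⟨s, hs, hu⟩, hay⟩⟩

end

theorem stmt8 {H : Type*} (op : H → H → Set H)
    (hne : ∀ a b : H, (op a b).Nonempty)
    (hLA : ∀ x y z : H, hmul op (op x y) {z} = hmul op (op z y) {x})
    (e : H) (he : ∀ a : H, a ∈ op e a)
    (h : ∀ a : H, hmul op {a} Set.univ = Set.univ) :
    (∀ a : H, hmul op Set.univ {a} = Set.univ) ∧
      (∀ a : H, ∃ x y : H, a ∈ hmul op (hmul op {x} (op a a)) {y}) :=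
  ⟨fun a => hmul_univ_singleton_eq_univ hLA he (h a),
    exists_mem_hmul_hmul_op_self hne e h⟩
end

section
/- If H is an intra-regular LA-semihypergroup with pure left identity, then for every bi-hyperideal B of H one has (B ∘ H) ∘ B = B. -/
/-!
Intra-regularity together with a pure left identity makes every element regular:
`a ∈ (a ∘ H) ∘ a`. From `a ∈ (x ∘ (a ∘ a)) ∘ y` the left invertive law and the law
`u ∘ (v ∘ w) = v ∘ (u ∘ w)` give `a ∈ P ∘ a` with `P = y ∘ (x ∘ a)`. Feeding this
back into `P` yields `a ∈ (y ∘ (x ∘ (P ∘ a))) ∘ a`, and `y ∘ (x ∘ (P ∘ a)) = P ∘ P`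
rearranges, by the medial law, to `a ∘ ((x ∘ x) ∘ ((y ∘ y) ∘ a)) ⊆ a ∘ H`.
Hence every subset `B` satisfies `B ⊆ (B ∘ H) ∘ B`.
-/

open Set

namespace Hmul

variable {H : Type*} {op : H → H → Set H}

def IsLeftInvertive (op : H → H → Set H) : Prop :=
  ∀ x y z : H, hmul op (op x y) {z} = hmul op (op z y) {x}

def IsPureLeftIdentity (op : H → H → Set H) (e : H) : Prop :=
  ∀ a : H, op e a = {a}

lemma mem_hmul {A B : Set H} {t : H} :
    t ∈ hmul op A B ↔ ∃ a ∈ A, ∃ b ∈ B, t ∈ op a b := by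
  simp [hmul]

lemma hmul_mono {A A' B B' : Set H} (hA : A ⊆ A') (hB : B ⊆ B') :
    hmul op A B ⊆ hmul op A' B' := by
  intro t ht
  obtain ⟨a, ha, b, hb, h⟩ := mem_hmul.1 ht
  exact mem_hmul.2 ⟨a, hA ha, b, hB hb, h⟩

lemma hmul_singleton_singleton (a b : H) : hmul op {a} {b} = op a b := by
  simp [hmul]

lemma mem_hmul_hmul {U V W : Set H} {t : H} :
    t ∈ hmul op (hmul op U V) W ↔
      ∃ u ∈ U, ∃ v ∈ V, ∃ w ∈ W, t ∈ hmul op (op u v) {w} := by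
  simp only [mem_hmul, mem_singleton_iff]
  constructor
  · rintro ⟨p, ⟨u, hu, v, hv, hp⟩, w, hw, ht⟩
    exact ⟨u, hu, v, hv, w, hw, p, hp, w, rfl, ht⟩
  · rintro ⟨u, hu, v, hv, w, hw, p, hp, w, rfl, ht⟩
    exact ⟨p, ⟨u, hu, v, hv, hp⟩, w, hw, ht⟩

lemma hmul_left_invertive (hLA : IsLeftInvertive op) (U V W : Set H) :
    hmul op (hmul op U V) W = hmul op (hmul op W V) U := by
  ext t
  simp only [mem_hmul_hmul]
  constructor
  · rintro ⟨u, hu, v, hv, w, hw, ht⟩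
    exact ⟨w, hw, v, hv, u, hu, hLA u v w ▸ ht⟩
  · rintro ⟨w, hw, v, hv, u, hu, ht⟩
    exact ⟨u, hu, v, hv, w, hw, (hLA u v w).symm ▸ ht⟩

lemma hmul_medial (hLA : IsLeftInvertive op) (A B C D : Set H) :
    hmul op (hmul op A B) (hmul op C D) = hmul op (hmul op A C) (hmul op B D) := by
  calc hmul op (hmul op A B) (hmul op C D)
      = hmul op (hmul op (hmul op C D) B) A := hmul_left_invertive hLA _ _ _
    _ = hmul op (hmul op (hmul op B D) C) A := by rw [hmul_left_invertive hLA C D B]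
    _ = hmul op (hmul op A C) (hmul op B D) := (hmul_left_invertive hLA _ _ _).symm

lemma singleton_hmul {e : H} (he : IsPureLeftIdentity op e) (U : Set H) :
    hmul op {e} U = U := by
  ext t
  simp [hmul, show ∀ a, op e a = {a} from he]

lemma hmul_left_comm (hLA : IsLeftInvertive op) {e : H} (he : IsPureLeftIdentity op e)
    (U V W : Set H) :
    hmul op U (hmul op V W) = hmul op V (hmul op U W) := by
  calc hmul op U (hmul op V W)
      = hmul op (hmul op {e} U) (hmul op V W) := by rw [singleton_hmul he]
    _ = hmul op (hmul op {e} V) (hmul op U W) := hmul_medial hLA _ _ _ _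
    _ = hmul op V (hmul op U W) := by rw [singleton_hmul he]

lemma mem_hmul_hmul_univ_self (hLA : IsLeftInvertive op) {e : H}
    (he : IsPureLeftIdentity op e) {a x y : H}
    (h : a ∈ hmul op (hmul op {x} (op a a)) {y}) :
    a ∈ hmul op (hmul op {a} univ) {a} := by
  set A : Set H := {a}
  set X : Set H := {x}
  set Y : Set H := {y}
  set P := hmul op Y (hmul op X A)
  have haP : a ∈ hmul op P A := by
    rwa [← hmul_singleton_singleton (op := op), hmul_left_comm hLA he X A A,
      hmul_left_invertive hLA] at h
  have hPP : hmul op Y (hmul op X (hmul op P A)) = hmul op A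
      (hmul op (hmul op X X) (hmul op (hmul op Y Y) A)) := by
    calc hmul op Y (hmul op X (hmul op P A))
        = hmul op P P := by rw [hmul_left_comm hLA he X, hmul_left_comm hLA he Y]
      _ = hmul op (hmul op Y Y) (hmul op (hmul op X X) (hmul op A A)) := by
        rw [hmul_medial hLA, hmul_medial hLA X A]
      _ = hmul op (hmul op X X) (hmul op A (hmul op (hmul op Y Y) A)) := by
        rw [hmul_left_comm hLA he _ (hmul op X X), hmul_left_comm hLA he _ A]
      _ = _ := hmul_left_comm hLA he _ _ _
  have hAPA : A ⊆ hmul op P A := singleton_subset_iff.2 haP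
  have haPA : a ∈ hmul op (hmul op Y (hmul op X (hmul op P A))) A :=
    hmul_mono (hmul_mono subset_rfl (hmul_mono subset_rfl hAPA)) subset_rfl haP
  rw [hPP] at haPA
  exact hmul_mono (hmul_mono subset_rfl (subset_univ _)) subset_rfl haPA

end Hmul

open Hmul in
theorem stmt9_general {H : Type*} (op : H → H → Set H)
    (hLA : ∀ x y z : H, hmul op (op x y) {z} = hmul op (op z y) {x})
    (e : H) (he : ∀ a : H, op e a = {a})
    (hir : ∀ a : H, ∃ x y : H, a ∈ hmul op (hmul op {x} (op a a)) {y})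
    (B : Set H)
    (hBi : hmul op (hmul op B Set.univ) B ⊆ B) :
    hmul op (hmul op B Set.univ) B = B := by
  refine Subset.antisymm hBi fun a ha => ?_
  obtain ⟨x, y, hxy⟩ := hir a
  have haB : {a} ⊆ B := singleton_subset_iff.2 ha
  exact hmul_mono (hmul_mono haB subset_rfl) haB (mem_hmul_hmul_univ_self hLA he hxy)

theorem stmt9 {H : Type*} (op : H → H → Set H)
    (hne : ∀ a b : H, (op a b).Nonempty)
    (hLA : ∀ x y z : H, hmul op (op x y) {z} = hmul op (op z y) {x})
    (e : H) (he : ∀ a : H, op e a = {a})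
    (hir : ∀ a : H, ∃ x y : H, a ∈ hmul op (hmul op {x} (op a a)) {y})
    (B : Set H) (hBne : B.Nonempty) (hBB : hmul op B B ⊆ B)
    (hBi : hmul op (hmul op B Set.univ) B ⊆ B) :
    hmul op (hmul op B Set.univ) B = B :=
  stmt9_general op hLA e he hir B hBi
end

section
/- If H is an intra-regular LA-semihypergroup with pure left identity, then for every interior hyperideal B of H one has (H ∘ B) ∘ H = B. -/
open Set

section Hyperoperation

variable {H : Type*} (op : H → H → Set H)

theorem hmul_mono {A A' B B' : Set H} (hA : A ⊆ A') (hB : B ⊆ B') :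
    hmul op A B ⊆ hmul op A' B' :=
  biUnion_mono hA fun _ _ => biUnion_mono hB fun _ _ => Subset.rfl

theorem op_subset_hmul {A B : Set H} {a b : H} (ha : a ∈ A) (hb : b ∈ B) :
    op a b ⊆ hmul op A B :=
  subset_biUnion_of_mem (u := fun a => ⋃ b ∈ B, op a b) ha |>.trans' <|
    subset_biUnion_of_mem (u := fun b => op a b) hb

theorem subset_hmul_univ_hmul_univ_of_intraRegular {B : Set H} (hBB : hmul op B B ⊆ B)
    (hir : ∀ b ∈ B, ∃ x y : H, b ∈ hmul op (hmul op {x} (op b b)) {y}) :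
    B ⊆ hmul op (hmul op univ B) univ := fun b hb => by
  obtain ⟨x, y, hxy⟩ := hir b hb
  have hbb : op b b ⊆ B := (op_subset_hmul op hb hb).trans hBB
  exact hmul_mono op (hmul_mono op (subset_univ _) hbb) (subset_univ _) hxy

end Hyperoperation

theorem stmt10_general {H : Type*} (op : H → H → Set H)
    (hir : ∀ a : H, ∃ x y : H, a ∈ hmul op (hmul op {x} (op a a)) {y})
    (B : Set H) (hBB : hmul op B B ⊆ B)
    (hBi : hmul op (hmul op Set.univ B) Set.univ ⊆ B) :
    hmul op (hmul op Set.univ B) Set.univ = B :=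
  hBi.antisymm <| subset_hmul_univ_hmul_univ_of_intraRegular op hBB fun b _ => hir b

theorem stmt10 {H : Type*} (op : H → H → Set H)
    (hne : ∀ a b : H, (op a b).Nonempty)
    (hLA : ∀ x y z : H, hmul op (op x y) {z} = hmul op (op z y) {x})
    (e : H) (he : ∀ a : H, op e a = {a})
    (hir : ∀ a : H, ∃ x y : H, a ∈ hmul op (hmul op {x} (op a a)) {y})
    (B : Set H) (hBne : B.Nonempty) (hBB : hmul op B B ⊆ B)
    (hBi : hmul op (hmul op Set.univ B) Set.univ ⊆ B) :
    hmul op (hmul op Set.univ B) Set.univ = B :=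
  stmt10_general op hir B hBB hBi
end

section
/- In an intra-regular LA-semihypergroup H with pure left identity, a nonempty subset A is a two-sided hyperideal of H if and only if A is a (1,2)-hyperideal of H. -/
open Set

/-!
With a pure left identity, intra-regularity `a ∈ (H(aa))H` yields `Ha ⊆ (aa)H` and
`aH ⊆ (aH)(aa)`. For a (1,2)-hyperideal `A` the second inclusion gives
`AH ⊆ (AH)(AA) ⊆ A`, and then the first gives `HA ⊆ (AA)H ⊆ AH ⊆ A`.
-/

namespace LASemihypergroup

variable {H : Type*} {op : H → H → Set H}

local notation:70 A:70 " ⋆ " B:71 => hmul op A B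

variable (op) in
def IsLeftInvertive : Prop := ∀ x y z : H, op x y ⋆ {z} = op z y ⋆ {x}

variable (op) in
def IsPureLeftIdentity (e : H) : Prop := ∀ a : H, op e a = {a}

variable (op) in
def IsIntraRegular : Prop := ∀ a : H, ∃ x y : H, a ∈ {x} ⋆ op a a ⋆ {y}

theorem hmul_mono {A B C D : Set H} (hAC : A ⊆ C) (hBD : B ⊆ D) : A ⋆ B ⊆ C ⋆ D :=
  biUnion_mono hAC fun _ _ ↦ biUnion_mono hBD fun _ _ ↦ Subset.rfl

theorem hmul_subset_iff_singleton_left {A B C : Set H} :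
    A ⋆ B ⊆ C ↔ ∀ a ∈ A, {a} ⋆ B ⊆ C := by
  simp [hmul]

theorem hmul_subset_iff_singleton_right {A B C : Set H} :
    A ⋆ B ⊆ C ↔ ∀ b ∈ B, A ⋆ {b} ⊆ C := by
  simp only [hmul, iUnion_subset_iff, mem_singleton_iff, forall_eq]
  exact forall₂_comm

theorem hmul_singleton_singleton (a b : H) : {a} ⋆ {b} = op a b := by
  simp [hmul]

theorem hmul_hmul_eq_biUnion (P Q R : Set H) :
    P ⋆ Q ⋆ R = ⋃ p ∈ P, ⋃ q ∈ Q, ⋃ r ∈ R, op p q ⋆ {r} := by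
  ext z
  simp only [hmul, mem_iUnion, exists_prop, mem_singleton_iff]
  grind

theorem hmul_left_invertive (hLA : IsLeftInvertive op)
    (P Q R : Set H) : P ⋆ Q ⋆ R = R ⋆ Q ⋆ P := by
  ext z
  simp only [hmul_hmul_eq_biUnion, mem_iUnion, exists_prop]
  constructor <;> rintro ⟨p, hp, q, hq, r, hr, hz⟩ <;> exact ⟨r, hr, q, hq, p, hp, hLA p q r ▸ hz⟩

theorem hmul_medial (hLA : IsLeftInvertive op)
    (P Q R S : Set H) : P ⋆ Q ⋆ (R ⋆ S) = P ⋆ R ⋆ (Q ⋆ S) := by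
  rw [hmul_left_invertive hLA P Q, hmul_left_invertive hLA R S Q,
    hmul_left_invertive hLA (Q ⋆ S) R P]

theorem IsPureLeftIdentity.singleton_hmul {e : H} (he : IsPureLeftIdentity op e) (P : Set H) :
    {e} ⋆ P = P := by
  simp [hmul, he _]

theorem hmul_left_comm (hLA : IsLeftInvertive op)
    {e : H} (he : IsPureLeftIdentity op e) (P Q R : Set H) : P ⋆ (Q ⋆ R) = Q ⋆ (P ⋆ R) := by
  conv_lhs => rw [← he.singleton_hmul P, hmul_medial hLA,
    he.singleton_hmul Q]

theorem hmul_paramedial (hLA : IsLeftInvertive op)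
    {e : H} (he : IsPureLeftIdentity op e) (P Q R S : Set H) :
    P ⋆ Q ⋆ (R ⋆ S) = S ⋆ R ⋆ (Q ⋆ P) := by
  rw [hmul_left_comm hLA he (P ⋆ Q), hmul_left_invertive hLA P Q S,
    hmul_left_comm hLA he R, hmul_medial hLA S Q R P]

theorem univ_hmul_univ {e : H} (he : IsPureLeftIdentity op e) : (univ : Set H) ⋆ univ = univ :=
  (subset_univ _).antisymm <| (he.singleton_hmul univ).symm.subset.trans
    (hmul_mono (subset_univ _) Subset.rfl)

theorem hmul_univ_hmul_univ (hLA : IsLeftInvertive op)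
    {e : H} (he : IsPureLeftIdentity op e) (X : Set H) : X ⋆ univ ⋆ univ = univ ⋆ X := by
  rw [hmul_left_invertive hLA, univ_hmul_univ he]

theorem univ_hmul_hmul_univ (hLA : IsLeftInvertive op)
    {e : H} (he : IsPureLeftIdentity op e) (X : Set H) : univ ⋆ X ⋆ univ = X ⋆ univ := by
  conv_lhs => rw [← univ_hmul_univ he, hmul_paramedial hLA he, univ_hmul_univ he,
    hmul_left_comm hLA he, univ_hmul_univ he]

theorem singleton_subset_univ_hmul_sq_hmul_univ (hir : IsIntraRegular op) (a : H) :
    {a} ⊆ univ ⋆ ({a} ⋆ {a}) ⋆ univ := by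
  obtain ⟨x, y, ha⟩ := hir a
  rw [singleton_subset_iff, hmul_singleton_singleton]
  exact hmul_mono (hmul_mono (subset_univ _) Subset.rfl) (subset_univ _) ha

theorem univ_hmul_singleton_subset (hLA : IsLeftInvertive op) {e : H}
    (he : IsPureLeftIdentity op e) (hir : IsIntraRegular op) (a : H) :
    univ ⋆ {a} ⊆ {a} ⋆ {a} ⋆ univ :=
  calc univ ⋆ {a} ⊆ univ ⋆ (univ ⋆ ({a} ⋆ {a}) ⋆ univ) :=
        hmul_mono Subset.rfl (singleton_subset_univ_hmul_sq_hmul_univ hir a)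
    _ = {a} ⋆ {a} ⋆ univ := by
        rw [univ_hmul_hmul_univ hLA he, hmul_left_comm hLA he, univ_hmul_univ he]

theorem singleton_hmul_univ_subset (hLA : IsLeftInvertive op) {e : H}
    (he : IsPureLeftIdentity op e) (hir : IsIntraRegular op) (a : H) :
    {a} ⋆ univ ⊆ {a} ⋆ univ ⋆ ({a} ⋆ {a}) :=
  calc {a} ⋆ univ ⊆ univ ⋆ ({a} ⋆ {a}) ⋆ univ ⋆ univ :=
        hmul_mono (singleton_subset_univ_hmul_sq_hmul_univ hir a) Subset.rfl
    _ = univ ⋆ univ ⋆ ({a} ⋆ {a}) := by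
        rw [univ_hmul_hmul_univ hLA he, hmul_univ_hmul_univ hLA he, univ_hmul_univ he]
    _ = univ ⋆ {a} ⋆ (univ ⋆ {a}) := hmul_medial hLA _ _ _ _
    _ ⊆ {a} ⋆ {a} ⋆ univ ⋆ (univ ⋆ {a}) :=
        hmul_mono (univ_hmul_singleton_subset hLA he hir a) Subset.rfl
    _ = {a} ⋆ univ ⋆ ({a} ⋆ {a}) := by
        rw [hmul_left_invertive hLA, univ_hmul_hmul_univ hLA he]

variable (op) in
def IsHyperideal (A : Set H) : Prop := univ ⋆ A ⊆ A ∧ A ⋆ univ ⊆ A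

variable (op) in
def IsOneTwoHyperideal (A : Set H) : Prop := A ⋆ A ⊆ A ∧ A ⋆ univ ⋆ (A ⋆ A) ⊆ A

theorem IsHyperideal.isOneTwoHyperideal {A : Set H} (hA : IsHyperideal op A) :
    IsOneTwoHyperideal op A :=
  have hAA : A ⋆ A ⊆ A := (hmul_mono (subset_univ A) Subset.rfl).trans hA.1
  ⟨hAA, (hmul_mono (subset_univ _) hAA).trans hA.1⟩

theorem IsOneTwoHyperideal.hmul_univ_subset (hLA : IsLeftInvertive op) {e : H}
    (he : IsPureLeftIdentity op e) (hir : IsIntraRegular op) {A : Set H}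
    (hA : IsOneTwoHyperideal op A) : A ⋆ univ ⊆ A :=
  hmul_subset_iff_singleton_left.2 fun a ha ↦
    have ha' : {a} ⊆ A := singleton_subset_iff.2 ha
    (singleton_hmul_univ_subset hLA he hir a).trans <|
      (hmul_mono (hmul_mono ha' Subset.rfl) (hmul_mono ha' ha')).trans hA.2

theorem IsOneTwoHyperideal.isHyperideal (hLA : IsLeftInvertive op) {e : H}
    (he : IsPureLeftIdentity op e) (hir : IsIntraRegular op) {A : Set H}
    (hA : IsOneTwoHyperideal op A) : IsHyperideal op A :=
  have hAU := hA.hmul_univ_subset hLA he hir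
  ⟨hmul_subset_iff_singleton_right.2 fun a ha ↦
    (univ_hmul_singleton_subset hLA he hir a).trans <|
      (hmul_mono ((hmul_mono (singleton_subset_iff.2 ha) (singleton_subset_iff.2 ha)).trans hA.1)
        Subset.rfl).trans hAU,
    hAU⟩

end LASemihypergroup

open LASemihypergroup

theorem stmt19_general {H : Type*} (op : H → H → Set H)
    (hLA : ∀ x y z : H, hmul op (op x y) {z} = hmul op (op z y) {x})
    (e : H) (he : ∀ a : H, op e a = {a})
    (hir : ∀ a : H, ∃ x y : H, a ∈ hmul op (hmul op {x} (op a a)) {y}) :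
    ∀ A : Set H, A.Nonempty →
      ((hmul op Set.univ A ⊆ A ∧ hmul op A Set.univ ⊆ A) ↔
        (hmul op A A ⊆ A ∧
          hmul op (hmul op A Set.univ) (hmul op A A) ⊆ A)) :=
  fun _ _ ↦ ⟨IsHyperideal.isOneTwoHyperideal, IsOneTwoHyperideal.isHyperideal hLA he hir⟩

theorem stmt19 {H : Type*} (op : H → H → Set H)
    (hne : ∀ a b : H, (op a b).Nonempty)
    (hLA : ∀ x y z : H, hmul op (op x y) {z} = hmul op (op z y) {x})
    (e : H) (he : ∀ a : H, op e a = {a})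
    (hir : ∀ a : H, ∃ x y : H, a ∈ hmul op (hmul op {x} (op a a)) {y}) :
    ∀ A : Set H, A.Nonempty →
      ((hmul op Set.univ A ⊆ A ∧ hmul op A Set.univ ⊆ A) ↔
        (hmul op A A ⊆ A ∧
          hmul op (hmul op A Set.univ) (hmul op A A) ⊆ A)) :=
  stmt19_general op hLA e he hir
end
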